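/- For n ≥ 5, the fifth derivative of the Chebyshev polynomial satisfies T_n^{(5)}(x) = Σ (1/(192 c_l)) · n (n² − (l−3)²)(n² − (l−1)²)(n² − (l+1)²)(n² − (l+3)²) T_l(x), where the sum runs over l from 0 to n−5 with n + l odd, and c_0 = 2, c_l = 1 for l ≥ 1. -/

import Mathlib

open Polynomial Polynomial.Chebyshev

noncomputable def c : ℕ → ℝ := fun l => if l = 0 then 2 else 1

/-!
Since `T_n' = n U_{n-1}`, it suffices to expand the derivatives of `U_m` in the basis `T_l`.
From `U_{m+2} = U_m + 2 T_{m+2}` one gets `U_{m+2}^{(k+1)} = U_m^{(k+1)} + 2 (m+2) U_{m+1}^{(k)}`, so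
by induction on `k`, and then on `m` in steps of two, the coefficients are pinned down by a two-term
recurrence starting from `U_m = ∑ (2 / c_l) T_l`. The closed form
`2 / (2^k k! c_l) · ∏_{j<k} ((m+1)² - (l+k-1-2j)²)` satisfies it: after factoring each
`N² - s² = (N - s)(N + s)`, the two products differ only in one boundary factor each.
The theorem is the case `k = 4`.
-/

open Finset

theorem c_ne_zero (l : ℕ) : c l ≠ 0 := by
  unfold c; split_ifs <;> norm_num

/-- The coefficient of `T_l` in the `k`-th derivative of `U_m`, for `l ≤ m` with `m + k + l` even.
It vanishes for such `l > m - k`, so the expansions below may run over all `l ≤ m`. -/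
noncomputable def uDerivCoeff (k m l : ℕ) : ℝ :=
  2 / (2 ^ k * k.factorial * c l) *
    ∏ j ∈ range k, (((m : ℝ) + 1) ^ 2 - ((l : ℝ) + k - 1 - 2 * j) ^ 2)

theorem prod_step_two_sub_prod (x y : ℝ) (k : ℕ) :
    ∏ j ∈ range (k + 1), ((x + 2 + 2 * j) * (y + 2 - 2 * j))
      - ∏ j ∈ range (k + 1), ((x + 2 * j) * (y - 2 * j))
      = 2 * (k + 1) * (x + y + 2) * ∏ j ∈ range k, ((x + 2 + 2 * j) * (y - 2 * j)) := by
  simp only [prod_mul_distrib]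
  rw [prod_range_succ (fun j : ℕ => x + 2 + 2 * (j : ℝ)),
    prod_range_succ' (fun j : ℕ => y + 2 - 2 * (j : ℝ)),
    prod_range_succ' (fun j : ℕ => x + 2 * (j : ℝ)), prod_range_succ (fun j : ℕ => y - 2 * (j : ℝ))]
  have hx : ∏ j ∈ range k, (x + 2 * ((j + 1 : ℕ) : ℝ)) = ∏ j ∈ range k, (x + 2 + 2 * (j : ℝ)) :=
    prod_congr rfl fun j _ => by push_cast; ring
  have hy : ∏ j ∈ range k, (y + 2 - 2 * ((j + 1 : ℕ) : ℝ)) = ∏ j ∈ range k, (y - 2 * (j : ℝ)) :=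
    prod_congr rfl fun j _ => by push_cast; ring
  rw [hx, hy]
  push_cast
  ring

theorem uDerivCoeff_succ_add_two (k m l : ℕ) :
    uDerivCoeff (k + 1) (m + 2) l
      = uDerivCoeff (k + 1) m l + 2 * (m + 2) * uDerivCoeff k (m + 1) l := by
  have key := prod_step_two_sub_prod ((m : ℝ) + 1 - l - k) (m + 1 + l + k) k
  have e1 :
      ∏ j ∈ range (k + 1), ((((m + 2 : ℕ) : ℝ) + 1) ^ 2 - ((l : ℝ) + (k + 1 : ℕ) - 1 - 2 * j) ^ 2)
      = ∏ j ∈ range (k + 1), (((m : ℝ) + 1 - l - k + 2 + 2 * j) * ((m : ℝ) + 1 + l + k + 2 - 2 * j)) :=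
    prod_congr rfl fun j _ => by push_cast; ring
  have e2 : ∏ j ∈ range (k + 1), ((((m : ℕ) : ℝ) + 1) ^ 2 - ((l : ℝ) + (k + 1 : ℕ) - 1 - 2 * j) ^ 2)
      = ∏ j ∈ range (k + 1), (((m : ℝ) + 1 - l - k + 2 * j) * ((m : ℝ) + 1 + l + k - 2 * j)) :=
    prod_congr rfl fun j _ => by push_cast; ring
  have e3 : ∏ j ∈ range k, ((((m + 1 : ℕ) : ℝ) + 1) ^ 2 - ((l : ℝ) + k - 1 - 2 * j) ^ 2)
      = ∏ j ∈ range k, (((m : ℝ) + 1 - l - k + 2 + 2 * j) * ((m : ℝ) + 1 + l + k - 2 * j)) :=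
    prod_congr rfl fun j _ => by push_cast; ring
  have hc := c_ne_zero l
  unfold uDerivCoeff
  rw [e1, e2, e3, Nat.factorial_succ]
  push_cast
  field_simp
  linear_combination 2 ^ k * key

theorem uDerivCoeff_eq_zero {k m l : ℕ} (hlo : m + 2 ≤ l + k) (hhi : l ≤ m + k)
    (hpar : Even (m + k + l)) : uDerivCoeff k m l = 0 := by
  obtain ⟨j, hj⟩ : ∃ j, l + k = m + 2 + 2 * j := by
    obtain ⟨r, hr⟩ := hpar; exact ⟨(l + k - m - 2) / 2, by omega⟩
  refine mul_eq_zero_of_right _ (prod_eq_zero (i := j) (mem_range.2 (by omega)) ?_)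
  have hj' : (l : ℝ) + k = m + 2 + 2 * j := by exact_mod_cast hj
  rw [show (l : ℝ) + k - 1 - 2 * j = m + 1 by linarith, sub_self]

theorem sum_filter_range_eq_of_le {M : Type*} [AddCommMonoid M] {p : ℕ → Prop} [DecidablePred p]
    {f : ℕ → M} {N N' : ℕ} (hN : N ≤ N') (hf : ∀ l, N ≤ l → l < N' → p l → f l = 0) :
    ∑ l ∈ (range N).filter p, f l = ∑ l ∈ (range N').filter p, f l := by
  refine sum_subset (filter_subset_filter _ (range_subset_range.2 hN)) fun l hl hl' => ?_
  simp only [mem_filter, mem_range, not_and] at hl hl'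
  exact hf l (not_lt.1 fun h => hl' h hl.2) hl.1 hl.2

theorem U_eq_sum_T (m : ℕ) :
    U ℝ m
      = ∑ l ∈ (range (m + 1)).filter (fun l => Even (m + l)), Polynomial.C (2 / c l) * T ℝ l := by
  induction m using Nat.twoStepInduction with
  | zero => simp [sum_filter, c]
  | one => simp [sum_filter, sum_range_succ, c, U_one, map_ofNat]
  | more m ih _ =>
    rw [sum_filter, sum_range_succ, sum_range_succ, ← sum_filter]
    have hU : U ℝ (m + 2 : ℕ) = 2 * T ℝ (m + 2 : ℕ) + U ℝ m := by
      push_cast; exact U_eq_two_mul_T_add_U ℝ m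
    have hc : c (m + 2) = 1 := if_neg (by omega)
    have hpar : (range (m + 1)).filter (fun l => Even (m + 2 + l))
        = (range (m + 1)).filter (fun l => Even (m + l)) :=
      filter_congr fun l _ => by simp only [Nat.even_iff]; omega
    rw [if_neg (by simp only [Nat.even_iff]; omega), if_pos (by simp only [Nat.even_iff]; omega),
      hU, ih, hpar, hc]
    norm_num [map_ofNat]
    ring

theorem derivative_T_natCast_succ (m : ℕ) :
    derivative (T ℝ (m + 1 : ℕ)) = Polynomial.C ((m : ℝ) + 1) * U ℝ m := by
  rw [T_derivative_eq_U]
  push_cast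
  simp [map_add, map_natCast]

theorem iterate_derivative_U_add_two (k m : ℕ) :
    derivative^[k + 1] (U ℝ (m + 2 : ℕ)) = derivative^[k + 1] (U ℝ m)
      + Polynomial.C (2 * ((m : ℝ) + 2)) * derivative^[k] (U ℝ (m + 1 : ℕ)) := by
  have hU : U ℝ (m + 2 : ℕ) = Polynomial.C 2 * T ℝ (m + 1 + 1 : ℕ) + U ℝ m := by
    push_cast
    rw [U_eq_two_mul_T_add_U, add_assoc, one_add_one_eq_two, ← C_ofNat]
  rw [hU, iterate_map_add, Function.iterate_succ_apply, derivative_C_mul,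
    derivative_T_natCast_succ, ← mul_assoc, ← map_mul, iterate_derivative_C_mul, add_comm]
  rw [show (((m + 1 : ℕ) : ℝ) + 1) = m + 2 by push_cast; ring]

theorem iterate_derivative_U_eq_sum (k m : ℕ) :
    derivative^[k] (U ℝ m) = ∑ l ∈ (range (m + 1)).filter (fun l => Even (m + k + l)),
      Polynomial.C (uDerivCoeff k m l) * T ℝ l := by
  induction k generalizing m with
  | zero => simpa [uDerivCoeff] using U_eq_sum_T m
  | succ k ihk =>
    induction m using Nat.twoStepInduction with
    | zero =>
      rw [Nat.cast_zero, U_zero, iterate_derivative_one k.succ_pos]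
      refine (sum_eq_zero fun l hl => ?_).symm
      simp only [mem_filter, mem_range] at hl
      rw [uDerivCoeff_eq_zero (by grind) (by omega) hl.2, map_zero, zero_mul]
    | one =>
      rcases k with _ | k
      · have h : uDerivCoeff 1 1 0 = 2 := by norm_num [uDerivCoeff, c]
        rw [sum_filter, sum_range_succ, sum_range_one, if_pos (by decide), if_neg (by decide), h]
        simp [U_one, map_ofNat]
      · rw [Nat.cast_one, U_one, ← C_ofNat, iterate_derivative_C_mul,
          iterate_derivative_X (by omega), mul_zero]
        refine (sum_eq_zero fun l hl => ?_).symm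
        simp only [mem_filter, mem_range] at hl
        rw [uDerivCoeff_eq_zero (by grind) (by omega) hl.2, map_zero, zero_mul]
    | more m ih _ =>
      rw [iterate_derivative_U_add_two, ih, ihk (m + 1),
        sum_filter_range_eq_of_le (N' := m + 3) (by omega) fun l hl hl' hp => by
          rw [uDerivCoeff_eq_zero (by omega) (by grind) hp, map_zero, zero_mul],
        sum_filter_range_eq_of_le (N := m + 1 + 1) (N' := m + 3) (by omega) fun l hl hl' hp => by
          rw [uDerivCoeff_eq_zero (by grind) (by grind) hp, map_zero, zero_mul]]
      have hpar₁ : (range (m + 3)).filter (fun l => Even (m + (k + 1) + l))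
          = (range (m + 3)).filter (fun l => Even (m + 2 + (k + 1) + l)) :=
        filter_congr fun l _ => by simp only [Nat.even_iff]; omega
      have hpar₂ : (range (m + 3)).filter (fun l => Even (m + 1 + k + l))
          = (range (m + 3)).filter (fun l => Even (m + 2 + (k + 1) + l)) :=
        filter_congr fun l _ => by simp only [Nat.even_iff]; omega
      rw [hpar₁, hpar₂, mul_sum, ← sum_add_distrib]
      refine sum_congr rfl fun l _ => ?_
      rw [uDerivCoeff_succ_add_two, ← mul_assoc, ← map_mul, ← add_mul, ← map_add]

theorem iterate_derivative_T_succ (k m : ℕ) :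
    derivative^[k + 1] (T ℝ (m + 1 : ℕ))
      = ∑ l ∈ (range (m + 1)).filter (fun l => Even (m + k + l)),
          Polynomial.C (((m : ℝ) + 1) * uDerivCoeff k m l) * T ℝ l := by
  rw [Function.iterate_succ_apply, derivative_T_natCast_succ, iterate_derivative_C_mul,
    iterate_derivative_U_eq_sum, mul_sum]
  simp only [← mul_assoc, ← map_mul]

theorem natCast_succ_mul_uDerivCoeff_four (m l : ℕ) :
    ((m : ℝ) + 1) * uDerivCoeff 4 m l
      = (1 / (192 * c l)) * (m + 1 : ℕ) * (((m + 1 : ℕ) : ℝ) ^ 2 - ((l : ℝ) - 3) ^ 2)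
        * (((m + 1 : ℕ) : ℝ) ^ 2 - ((l : ℝ) - 1) ^ 2) * (((m + 1 : ℕ) : ℝ) ^ 2 - ((l : ℝ) + 1) ^ 2)
        * (((m + 1 : ℕ) : ℝ) ^ 2 - ((l : ℝ) + 3) ^ 2) := by
  simp only [uDerivCoeff, prod_range_succ, prod_range_zero]
  push_cast
  rw [show Nat.factorial 4 = 24 from rfl]
  push_cast
  ring

theorem chebyshev_deriv_five_general (n : ℕ) :
    Polynomial.derivative^[5] (T ℝ n) =
      ∑ l ∈ (Finset.range (n - 4)).filter (fun l => Odd (n + l)),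
        Polynomial.C ((1 / (192 * c l)) * n * ((n : ℝ) ^ 2 - ((l : ℝ) - 3) ^ 2)
          * ((n : ℝ) ^ 2 - ((l : ℝ) - 1) ^ 2) * ((n : ℝ) ^ 2 - ((l : ℝ) + 1) ^ 2)
          * ((n : ℝ) ^ 2 - ((l : ℝ) + 3) ^ 2)) * T ℝ l := by
  rcases n with _ | m
  · simp [iterate_derivative_one]
  have hpar : (range (m + 1 - 4)).filter (fun l => Even (m + 4 + l))
      = (range (m + 1 - 4)).filter (fun l => Odd (m + 1 + l)) :=
    filter_congr fun l _ => by simp only [Nat.even_iff, Nat.odd_iff]; omega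
  rw [iterate_derivative_T_succ 4 m, ← sum_filter_range_eq_of_le (N := m + 1 - 4) (by omega)
    fun l _ _ hp => by rw [uDerivCoeff_eq_zero (by grind) (by omega) hp, mul_zero, map_zero, zero_mul],
    hpar]
  simp only [natCast_succ_mul_uDerivCoeff_four]

theorem chebyshev_deriv_five (n : ℕ) (hn : 5 ≤ n) :
    Polynomial.derivative^[5] (T ℝ n) =
      ∑ l ∈ (Finset.range (n - 4)).filter (fun l => Odd (n + l)),
        Polynomial.C ((1 / (192 * c l)) * n * ((n : ℝ) ^ 2 - ((l : ℝ) - 3) ^ 2)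
          * ((n : ℝ) ^ 2 - ((l : ℝ) - 1) ^ 2) * ((n : ℝ) ^ 2 - ((l : ℝ) + 1) ^ 2)
          * ((n : ℝ) ^ 2 - ((l : ℝ) + 3) ^ 2)) * T ℝ l :=
  chebyshev_deriv_five_general n
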